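/- Let S be a left cancellative monoid. Let X = X^0 ∖ (X^1 ∪ ⋯ ∪ X^{m_0}) and, for i = 1,…,m (m ≥ 1), X_i = X_i^0 ∖ (X_i^1 ∪ ⋯ ∪ X_i^{m_i}), where all the sets X^j and X_i^j belong to J(S), and assume X_i ⊆ X for all i. For a character η, say η(X) = 1 if η(X^0) = 1 and η(X^j) = 0 for 1 ≤ j ≤ m_0, and define η(X_i) = 1 analogously via the given representation of X_i. Then the set U = {η ∈ Ω(S) : η(X) = 1 and η(X_i) = 0 for i = 1,…,m} is disjoint from ∂Ω(S) if and only if {X_1, …, X_m} is a foundation set for X, i.e. every nonempty Y ∈ J(S) with Y ⊆ X intersects some X_i. -/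

import Mathlib

open scoped Classical

namespace SgC

variable {M : Type*}

/-- Composition of partial maps (`g` after `f`). -/
def pcomp (g f : M → Option M) : M → Option M := fun s => (f s).bind g

/-- The canonical partial inverse of a partial map (the genuine inverse when the map
is injective on its domain, as is the case for all maps in the left inverse hull of a
left cancellative monoid). -/
noncomputable def pinv (f : M → Option M) : M → Option M :=
  fun t => if h : ∃ s, f s = some t then some h.choose else none

/-- Left translation `t ↦ s * t` as an everywhere-defined partial map. -/
def ptransl [Mul M] (s : M) : M → Option M := fun t => some (s * t)

/-- The identity partial map. -/
def pid : M → Option M := fun s => some s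

/-- The block `q⁻¹ ∘ p`: first multiply on the left by `p`, then remove `q` on the left. -/
noncomputable def pblock [Mul M] (p : M × M) : M → Option M :=
  pcomp (pinv (ptransl p.2)) (ptransl p.1)

/-- Membership in the left inverse hull `I_ℓ(M)`: `h` is of the form
`s₂ₙ⁻¹ s₂ₙ₋₁ ⋯ s₂⁻¹ s₁` for some `n ≥ 1` and `sᵢ ∈ M` (the list records the pairs
`(s₁,s₂), (s₃,s₄), …`, applied left to right). -/
def InInvHull [Mul M] (h : M → Option M) : Prop :=
  ∃ l : List (M × M), l ≠ [] ∧
    h = l.foldl (fun acc p => pcomp (pblock p) acc) pid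

/-- Membership in the inverse hull generated by translations by elements of `σ` only
(used for canonical copies of `I_ℓ(S)` inside partial maps of a larger monoid). -/
def InInvHullOn [Mul M] (σ : Set M) (h : M → Option M) : Prop :=
  ∃ l : List (M × M), l ≠ [] ∧ (∀ p ∈ l, p.1 ∈ σ ∧ p.2 ∈ σ) ∧
    h = l.foldl (fun acc p => pcomp (pblock p) acc) pid

/-- Domain of a partial map. -/
def pdom (h : M → Option M) : Set M := {s | h s ≠ none}

/-- `h` fixes the set `Y` pointwise (in particular `Y ⊆ dom h`). -/
def PFixes (h : M → Option M) (Y : Set M) : Prop := ∀ s ∈ Y, h s = some s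

/-- Preimage of a set under a partial map. -/
def ppre (h : M → Option M) (X : Set M) : Set M := {s | ∃ x ∈ X, h s = some x}

/-- Constructible right ideals: domains of elements of the left inverse hull. -/
def IsConstructible [Mul M] (X : Set M) : Prop := ∃ h, InInvHull h ∧ X = pdom h

/-- Membership in `J̄(S)`: sets of the form `X₀` or `X₀ ∖ (X₁ ∪ ⋯ ∪ Xₘ)` with all
`Xᵢ` constructible. -/
def IsConstructibleBar [Mul M] (X : Set M) : Prop :=
  ∃ (X₀ : Set M) (m : ℕ) (Xi : Fin m → Set M),
    IsConstructible X₀ ∧ (∀ i, IsConstructible (Xi i)) ∧ X = X₀ \ ⋃ i, Xi i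

/-- `Xi` is a foundation family for `X`: each `Xi i ⊆ X` and every nonempty
constructible right ideal contained in `X` intersects some `Xi i`. -/
def IsFoundation [Mul M] (X : Set M) {ι : Type*} (Xi : ι → Set M) : Prop :=
  (∀ i, Xi i ⊆ X) ∧
  ∀ Y : Set M, IsConstructible Y → Y.Nonempty → Y ⊆ X → ∃ i, (Y ∩ Xi i).Nonempty

/-- Strong C*-regularity. -/
def StronglyRegular (M : Type*) [Monoid M] : Prop :=
  ∀ (n : ℕ) (h : Fin n → M → Option M), (∀ k, InInvHull (h k)) →
  ∀ (m : ℕ) (X : Set M) (Xi : Fin m → Set M),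
    IsConstructible X → (∀ i, IsConstructible (Xi i)) →
    (X \ ⋃ i, Xi i).Nonempty →
    (X \ ⋃ i, Xi i) ⊆ ⋃ k, {s | h k s = some s} →
    ∃ (l : ℕ) (Y : Fin l → Set M) (kk : Fin l → Fin n),
      (∀ j, IsConstructible (Y j)) ∧
      (X \ ⋃ i, Xi i) ⊆ ⋃ j, Y j ∧
      ∀ j, PFixes (h (kk j)) (Y j)

/-- C*-regularity. -/
def Regular (M : Type*) [Monoid M] : Prop :=
  ∀ (n : ℕ) (h : Fin n → M → Option M), (∀ k, InInvHull (h k)) →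
  ∀ X : Set M, IsConstructibleBar X → X.Nonempty →
    X ⊆ ⋃ k, {s | h k s = some s} →
    ∃ (l : ℕ) (Y : Fin l → Set M) (kk : Fin l → Fin n),
      (∀ j, IsConstructibleBar (Y j)) ∧ X ⊆ ⋃ j, Y j ∧
      ∀ j, PFixes (h (kk j)) (Y j)

/-- Strong C*-regularity on the boundary. -/
def StronglyRegularOnBoundary (M : Type*) [Monoid M] : Prop :=
  ∀ (n : ℕ) (h : Fin n → M → Option M), (∀ k, InInvHull (h k)) →
  ∀ (m : ℕ) (X : Set M) (Xi : Fin m → Set M),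
    IsConstructible X → (∀ i, IsConstructible (Xi i)) → (∀ i, Xi i ⊆ X) →
    (X \ ⋃ i, Xi i).Nonempty →
    (X \ ⋃ i, Xi i) ⊆ ⋃ k, {s | h k s = some s} →
    ∃ (l : ℕ) (Y : Fin l → Set M) (kk : Fin l → Fin n),
      (∀ j, IsConstructible (Y j)) ∧ (∀ j, PFixes (h (kk j)) (Y j)) ∧
      IsFoundation X (Sum.elim Xi Y)

/-- C*-regularity on the boundary. -/
def RegularOnBoundary (M : Type*) [Monoid M] : Prop :=
  ∀ (n : ℕ) (h : Fin n → M → Option M), (∀ k, InInvHull (h k)) →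
  ∀ (m : ℕ) (X : Set M) (Xi : Fin m → Set M),
    IsConstructible X → (∀ i, IsConstructible (Xi i)) → (∀ i, Xi i ⊆ X) →
    (X \ ⋃ i, Xi i).Nonempty →
    (X \ ⋃ i, Xi i) ⊆ ⋃ k, {s | h k s = some s} →
    ∃ (l : ℕ) (Y : Fin l → Set M) (kk : Fin l → Fin n),
      (∀ j, IsConstructibleBar (Y j)) ∧ (∀ j, PFixes (h (kk j)) (Y j)) ∧
      IsFoundation X (Sum.elim Xi Y)

/-- The type of constructible right ideals `J(M)`. -/
def CIdeal (M : Type*) [Mul M] : Type _ := {X : Set M // IsConstructible X}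

/-- The character space `{0,1}^{J(M)}` with the topology of pointwise convergence. -/
abbrev CharSpace (M : Type*) [Mul M] : Type _ := CIdeal M → Bool

/-- The principal character `χ_s`. -/
noncomputable def princhar [Mul M] (s : M) : CharSpace M :=
  fun X => decide (s ∈ X.1)

/-- `Ω(M)`: the closure of the set of principal characters. -/
noncomputable def Omega (M : Type*) [Mul M] : Set (CharSpace M) :=
  closure (Set.range (princhar : M → CharSpace M))

/-- Filters on `J(M)`: nonempty collections of nonempty constructible ideals closed
under intersections and enlargements within `J(M)`. -/
def IsFilterOn [Mul M] (F : Set (CIdeal M)) : Prop :=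
  F.Nonempty ∧ (∀ X ∈ F, (X.1 : Set M).Nonempty) ∧
  (∀ X ∈ F, ∀ Y ∈ F, ∀ Z : CIdeal M, Z.1 = X.1 ∩ Y.1 → Z ∈ F) ∧
  (∀ X ∈ F, ∀ Y : CIdeal M, X.1 ⊆ Y.1 → Y ∈ F)

/-- Nonzero multiplicative `{0,1}`-valued maps on `J(M)`. -/
def IsChar [Mul M] (χ : CharSpace M) : Prop :=
  (∃ X, χ X = true) ∧
  ∀ X Y Z : CIdeal M, Z.1 = X.1 ∩ Y.1 → χ Z = (χ X && χ Y)

/-- Maximal characters: characters whose associated filter is maximal among filters. -/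
def IsMaximalChar [Mul M] (χ : CharSpace M) : Prop :=
  IsChar χ ∧ IsFilterOn {X | χ X = true} ∧
  ∀ G : Set (CIdeal M), IsFilterOn G → {X | χ X = true} ⊆ G → G = {X | χ X = true}

/-- The set of maximal characters `Ω_max(M)`. -/
def OmegaMax (M : Type*) [Mul M] : Set (CharSpace M) := {χ | IsMaximalChar χ}

/-- The boundary `∂Ω(M)`: the closure of the set of maximal characters. -/
noncomputable def BoundaryOmega (M : Type*) [Mul M] : Set (CharSpace M) :=
  closure (OmegaMax M)

/-! A maximal character `χ` is read off its filter: `χ(A ∖ ⋃ Bⱼ) = 1` iff the filter contains a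
subset of `A ∖ ⋃ Bⱼ`, because a maximal filter that does not contain `W` contains an ideal disjoint
from `W`. So if `{Xᵢ}` is a foundation set for `X`, a maximal character in the open set `U` would
produce a nonempty constructible ideal inside `X` missing every `Xᵢ`, which is impossible. Conversely,
a nonempty constructible `Y ⊆ X` missing every `Xᵢ` extends (Zorn) to a maximal filter whose
character lies in `U ∩ Ω_max`; and `Ω_max ⊆ Ω`, since by the same filter property a principal
character `χ_s` with `s` in a suitable member of the filter agrees with `χ` on any finite set of
ideals. -/

section PartialMaps

def PInjective (f : M → Option M) : Prop :=
  ∀ ⦃s t u : M⦄, f s = some u → f t = some u → s = t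

lemma pcomp_assoc (f g h : M → Option M) : pcomp h (pcomp g f) = pcomp (pcomp h g) f := by
  funext s
  exact Option.bind_assoc (f s) g h

lemma pid_pcomp (f : M → Option M) : pcomp pid f = f := by
  funext s
  exact Option.bind_fun_some (f s)

lemma pcomp_eq_some {g f : M → Option M} {s t : M} :
    pcomp g f s = some t ↔ ∃ u, f s = some u ∧ g u = some t :=
  Option.bind_eq_some_iff

lemma PInjective.pinv_eq_some {f : M → Option M} (hf : PInjective f) {s t : M} :
    pinv f t = some s ↔ f s = some t := by
  by_cases he : ∃ s, f s = some t
  · simp only [pinv, he, dite_true, Option.some_inj]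
    exact ⟨fun h => h ▸ he.choose_spec, fun h => hf he.choose_spec h⟩
  · simp only [pinv, he, dite_false, reduceCtorEq, false_iff]
    exact fun h => he ⟨s, h⟩

lemma pInjective_pinv (f : M → Option M) : PInjective (pinv f) := by
  intro s t u hs ht
  by_cases he : ∃ v, f v = some s
  · by_cases he' : ∃ v, f v = some t
    · simp only [pinv, he, he', dite_true, Option.some_inj] at hs ht
      exact Option.some_inj.mp (he.choose_spec.symm.trans (hs ▸ ht ▸ he'.choose_spec))
    · simp [pinv, he'] at ht
  · simp [pinv, he] at hs

lemma pInjective_pid : PInjective (pid : M → Option M) := by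
  intro s t u hs ht
  exact Option.some_inj.mp (hs.trans ht.symm)

lemma PInjective.comp {f g : M → Option M} (hg : PInjective g) (hf : PInjective f) :
    PInjective (pcomp g f) := by
  intro s t u hs ht
  obtain ⟨a, ha, ha'⟩ := pcomp_eq_some.mp hs
  obtain ⟨b, hb, hb'⟩ := pcomp_eq_some.mp ht
  exact hf ha (hg ha' hb' ▸ hb)

lemma PInjective.pinv_comp {f g : M → Option M} (hg : PInjective g) (hf : PInjective f) :
    pinv (pcomp g f) = pcomp (pinv f) (pinv g) := by
  funext t
  refine Option.ext fun s => ?_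
  rw [(hg.comp hf).pinv_eq_some, pcomp_eq_some, pcomp_eq_some]
  exact ⟨fun ⟨u, hu, hu'⟩ => ⟨u, hg.pinv_eq_some.mpr hu', hf.pinv_eq_some.mpr hu⟩,
    fun ⟨u, hu, hu'⟩ => ⟨u, hf.pinv_eq_some.mp hu', hg.pinv_eq_some.mp hu⟩⟩

lemma pinv_pid : pinv (pid : M → Option M) = pid := by
  funext t
  refine Option.ext fun s => ?_
  rw [pInjective_pid.pinv_eq_some]
  exact eq_comm

lemma PInjective.pinv_pinv {f : M → Option M} (hf : PInjective f) : pinv (pinv f) = f := by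
  funext t
  refine Option.ext fun s => ?_
  rw [(pInjective_pinv f).pinv_eq_some, hf.pinv_eq_some]

lemma PInjective.pcomp_pinv_self {h : M → Option M} (hh : PInjective h) (s : M) :
    pcomp (pinv h) h s = (h s).map fun _ => s := by
  cases hs : h s with
  | none => simp [pcomp, hs]
  | some t => simpa [pcomp, hs] using hh.pinv_eq_some.mpr hs

lemma pdom_pcomp_pcomp_pinv_self {h g : M → Option M} (hh : PInjective h) :
    pdom (pcomp g (pcomp (pinv h) h)) = pdom h ∩ pdom g := by
  ext s
  change (pcomp (pinv h) h s).bind g ≠ none ↔ h s ≠ none ∧ g s ≠ none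
  rw [hh.pcomp_pinv_self]
  cases h s <;> simp

variable [Mul M] [IsLeftCancelMul M]

lemma pInjective_ptransl (a : M) : PInjective (ptransl a) := by
  intro s t u hs ht
  exact mul_left_cancel (Option.some_inj.mp (hs.trans ht.symm))

lemma pInjective_pblock (p : M × M) : PInjective (pblock p) :=
  (pInjective_pinv _).comp (pInjective_ptransl p.1)

lemma pinv_pblock (p : M × M) : pinv (pblock p) = pblock p.swap := by
  rw [pblock, (pInjective_pinv _).pinv_comp (pInjective_ptransl p.1),
    (pInjective_ptransl p.2).pinv_pinv]
  rfl

end PartialMaps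

section InverseHull

/-- The partial map that `InInvHull` attaches to a list of pairs. -/
noncomputable def blocks [Mul M] (l : List (M × M)) : M → Option M :=
  l.foldl (fun acc p => pcomp (pblock p) acc) pid

variable [Mul M]

lemma foldl_pcomp_pblock (l : List (M × M)) (f : M → Option M) :
    l.foldl (fun acc p => pcomp (pblock p) acc) f = pcomp (blocks l) f := by
  induction l generalizing f with
  | nil => exact (pid_pcomp f).symm
  | cons p l ih =>
    rw [List.foldl_cons, ih, show blocks (p :: l) = pcomp (blocks l) (pblock p) from ih _,
      pcomp_assoc]

lemma blocks_append (l l' : List (M × M)) :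
    blocks (l ++ l') = pcomp (blocks l') (blocks l) := by
  rw [blocks, List.foldl_append, foldl_pcomp_pblock]
  rfl

lemma blocks_singleton (p : M × M) : blocks [p] = pblock p := rfl

lemma InInvHull.pcomp {h g : M → Option M} (hg : InInvHull g) (hh : InInvHull h) :
    InInvHull (pcomp g h) := by
  obtain ⟨l, hl, rfl⟩ := hh
  obtain ⟨l', -, rfl⟩ := hg
  exact ⟨l ++ l', by simp [hl], (blocks_append l l').symm⟩

variable [IsLeftCancelMul M]

lemma pInjective_blocks (l : List (M × M)) : PInjective (blocks l) := by
  induction l with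
  | nil => exact pInjective_pid
  | cons p l ih =>
    rw [← List.singleton_append, blocks_append]
    exact ih.comp (pInjective_pblock p)

lemma pinv_blocks (l : List (M × M)) :
    pinv (blocks l) = blocks (l.reverse.map Prod.swap) := by
  induction l with
  | nil => exact pinv_pid
  | cons p l ih =>
    rw [← List.singleton_append, blocks_append, blocks_singleton,
      (pInjective_blocks l).pinv_comp (pInjective_pblock p), ih, pinv_pblock,
      List.reverse_append, List.map_append, blocks_append]
    rfl

lemma InInvHull.pInjective {h : M → Option M} (hh : InInvHull h) : PInjective h := by
  obtain ⟨l, -, rfl⟩ := hh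
  exact pInjective_blocks l

lemma InInvHull.pinv {h : M → Option M} (hh : InInvHull h) : InInvHull (pinv h) := by
  obtain ⟨l, hl, rfl⟩ := hh
  exact ⟨l.reverse.map Prod.swap, by simp [hl], pinv_blocks l⟩

/-- `X ∩ Y` is the domain of `g ∘ h⁻¹ ∘ h` when `X = dom h` and `Y = dom g`. -/
lemma IsConstructible.inter {X Y : Set M} (hX : IsConstructible X) (hY : IsConstructible Y) :
    IsConstructible (X ∩ Y) := by
  obtain ⟨h, hh, rfl⟩ := hX
  obtain ⟨g, hg, rfl⟩ := hY
  exact ⟨_, hg.pcomp (hh.pinv.pcomp hh), (pdom_pcomp_pcomp_pinv_self hh.pInjective).symm⟩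

end InverseHull

section Characters

variable [Mul M]

lemma isClopen_setOf_apply_eq (K : CIdeal M) (b : Bool) :
    IsClopen {η : CharSpace M | η K = b} :=
  (isClopen_discrete {b}).preimage (continuous_apply K)

lemma isClopen_setOf_eval_diff (A : CIdeal M) {ι : Type*} [Finite ι] (B : ι → CIdeal M) :
    IsClopen {η : CharSpace M | η A = true ∧ ∀ j, η (B j) = false} := by
  simp only [Set.ofPred_and, Set.ofPred_forall]
  exact (isClopen_setOf_apply_eq A true).inter
    (isClopen_iInter_of_finite fun j => isClopen_setOf_apply_eq (B j) false)

lemma isOpen_setOf_eval_diff_and_forall_not_eval_diff (A : CIdeal M) {κ : Type*} [Finite κ]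
    (B : κ → CIdeal M) {ι : Type*} [Finite ι] (A' : ι → CIdeal M) {κ' : ι → Type*}
    [∀ i, Finite (κ' i)] (B' : ∀ i, κ' i → CIdeal M) :
    IsOpen {η : CharSpace M | (η A = true ∧ ∀ j, η (B j) = false) ∧
      ∀ i, ¬ (η (A' i) = true ∧ ∀ j, η (B' i j) = false)} := by
  rw [Set.ofPred_and, Set.ofPred_forall]
  exact (isClopen_setOf_eval_diff A B).isOpen.inter <| isOpen_iInter_of_finite fun i =>
    (isClopen_setOf_eval_diff (A' i) (B' i)).compl.isOpen

lemma isFilterOn_principal {Y : CIdeal M} (hY : Y.1.Nonempty) :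
    IsFilterOn {Z : CIdeal M | Y.1 ⊆ Z.1} :=
  ⟨⟨Y, subset_refl Y.1⟩, fun _ hZ => hY.mono hZ,
    fun _ hX _ hY' _ hZ => (Set.subset_inter hX hY').trans hZ.symm.subset,
    fun _ hX _ hXZ => hX.trans hXZ⟩

lemma IsFilterOn.exists_maximal {F : Set (CIdeal M)} (hF : IsFilterOn F) :
    ∃ G, F ⊆ G ∧ Maximal IsFilterOn G := by
  refine zorn_subset_nonempty {F | IsFilterOn F} (fun c hc hchain ⟨F₁, hF₁⟩ => ?_) F hF
  refine ⟨⋃₀ c, ⟨?_, ?_, ?_, ?_⟩, fun _ => Set.subset_sUnion_of_mem⟩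
  · obtain ⟨Z, hZ⟩ := (hc hF₁).1
    exact ⟨Z, F₁, hF₁, hZ⟩
  · rintro X ⟨F, hFc, hXF⟩
    exact (hc hFc).2.1 X hXF
  · rintro X ⟨F, hFc, hXF⟩ Y ⟨F', hF'c, hYF'⟩ Z hZ
    rcases hchain.total hFc hF'c with hFF' | hF'F
    · exact ⟨F', hF'c, (hc hF'c).2.2.1 X (hFF' hXF) Y hYF' Z hZ⟩
    · exact ⟨F, hFc, (hc hFc).2.2.1 X hXF Y (hF'F hYF') Z hZ⟩
  · rintro X ⟨F, hFc, hXF⟩ Y hXY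
    exact ⟨F, hFc, (hc hFc).2.2.2 X hXF Y hXY⟩

lemma isMaximalChar_of_maximal {G : Set (CIdeal M)} (hG : Maximal IsFilterOn G) :
    IsMaximalChar fun X => decide (X ∈ G) := by
  have hset : {X : CIdeal M | decide (X ∈ G) = true} = G := by
    ext X
    simp
  refine ⟨⟨?_, fun X Y Z hZ => ?_⟩, ?_, ?_⟩
  · obtain ⟨Z, hZ⟩ := hG.1.1
    exact ⟨Z, decide_eq_true hZ⟩
  · have hmem : Z ∈ G ↔ X ∈ G ∧ Y ∈ G :=
      ⟨fun h => ⟨hG.1.2.2.2 Z h X (hZ ▸ Set.inter_subset_left),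
          hG.1.2.2.2 Z h Y (hZ ▸ Set.inter_subset_right)⟩,
        fun ⟨hX, hY⟩ => hG.1.2.2.1 X hX Y hY Z hZ⟩
    simp only [hmem, Bool.decide_and]
  · rw [hset]
    exact hG.1
  · rw [hset]
    exact fun G' hG' hGG' => (hG.2 hG' hGG').antisymm hGG'

lemma exists_isMaximalChar_eq_true {Y : CIdeal M} (hY : Y.1.Nonempty) :
    ∃ χ : CharSpace M, IsMaximalChar χ ∧ χ Y = true := by
  obtain ⟨G, hYG, hG⟩ := (isFilterOn_principal hY).exists_maximal
  exact ⟨_, isMaximalChar_of_maximal hG, decide_eq_true (hYG (subset_refl Y.1))⟩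

end Characters

def CIdeal.inter [Mul M] [IsLeftCancelMul M] (X Y : CIdeal M) : CIdeal M :=
  ⟨X.1 ∩ Y.1, X.2.inter Y.2⟩

namespace IsFilterOn

variable [Mul M] [IsLeftCancelMul M] {F : Set (CIdeal M)}

lemma inter_mem (hF : IsFilterOn F) {X Y : CIdeal M} (hX : X ∈ F) (hY : Y ∈ F) :
    X.inter Y ∈ F :=
  hF.2.2.1 X hX Y hY _ rfl

lemma exists_mem_subset_of_finite (hF : IsFilterOn F) {ι : Type*} [Finite ι]
    (f : ι → CIdeal M) (hf : ∀ i, f i ∈ F) : ∃ Z ∈ F, ∀ i, Z.1 ⊆ (f i).1 := by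
  suffices ∀ T : Finset (CIdeal M), ↑T ⊆ F → ∃ Z ∈ F, ∀ W ∈ T, Z.1 ⊆ W.1 by
    obtain ⟨Z, hZ, hZsub⟩ :=
      this (Set.finite_range f).toFinset (by simpa using Set.range_subset_iff.2 hf)
    exact ⟨Z, hZ, fun i => hZsub _ (by simp)⟩
  intro T
  induction T using Finset.induction_on with
  | empty =>
    obtain ⟨Z, hZ⟩ := hF.1
    exact fun _ => ⟨Z, hZ, by simp⟩
  | insert W T _ ih =>
    intro hT
    rw [Finset.coe_insert, Set.insert_subset_iff] at hT
    obtain ⟨Z, hZ, hZsub⟩ := ih hT.2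
    refine ⟨Z.inter W, hF.inter_mem hZ hT.1, ?_⟩
    simp only [Finset.mem_insert, forall_eq_or_imp]
    exact ⟨Set.inter_subset_right, fun V hV => Set.inter_subset_left.trans (hZsub V hV)⟩

end IsFilterOn

namespace IsMaximalChar

variable [Mul M] {χ : CharSpace M}

lemma isFilterOn (hχ : IsMaximalChar χ) : IsFilterOn {X | χ X = true} := hχ.2.1

lemma nonempty (hχ : IsMaximalChar χ) {X : CIdeal M} (hX : χ X = true) : X.1.Nonempty :=
  hχ.isFilterOn.2.1 X hX

variable [IsLeftCancelMul M]

/-- Otherwise the ideals containing some `Z ∩ W` with `χ Z = 1` would form a strictly larger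
filter. -/
lemma exists_disjoint_of_eq_false (hχ : IsMaximalChar χ) {W : CIdeal M} (hW : χ W = false) :
    ∃ Z, χ Z = true ∧ Disjoint Z.1 W.1 := by
  by_contra! hmeet
  have hF := hχ.isFilterOn
  set G : Set (CIdeal M) := {V | ∃ Z, χ Z = true ∧ Z.1 ∩ W.1 ⊆ V.1}
  have hFG : {X | χ X = true} ⊆ G := fun X hX => ⟨X, hX, Set.inter_subset_left⟩
  have hG : IsFilterOn G := by
    refine ⟨hF.1.mono hFG, ?_, ?_, ?_⟩
    · rintro V ⟨Z, hZ, hZV⟩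
      exact (Set.not_disjoint_iff_nonempty_inter.mp (hmeet Z hZ)).mono hZV
    · rintro V₁ ⟨Z₁, hZ₁, hV₁⟩ V₂ ⟨Z₂, hZ₂, hV₂⟩ V hV
      refine ⟨Z₁.inter Z₂, hF.inter_mem hZ₁ hZ₂, hV ▸ ?_⟩
      rintro x ⟨⟨hx₁, hx₂⟩, hxW⟩
      exact ⟨hV₁ ⟨hx₁, hxW⟩, hV₂ ⟨hx₂, hxW⟩⟩
    · rintro V ⟨Z, hZ, hZV⟩ V' hVV'
      exact ⟨Z, hZ, hZV.trans hVV'⟩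
  obtain ⟨Z₀, hZ₀⟩ := hF.1
  have hWG : W ∈ G := ⟨Z₀, hZ₀, Set.inter_subset_right⟩
  rw [hχ.2.2 G hG hFG] at hWG
  exact Bool.false_ne_true (hW.symm.trans hWG)

lemma eval_diff_iff (hχ : IsMaximalChar χ) (A : CIdeal M) {ι : Type*} [Finite ι]
    (B : ι → CIdeal M) :
    (χ A = true ∧ ∀ j, χ (B j) = false) ↔ ∃ Z, χ Z = true ∧ Z.1 ⊆ A.1 \ ⋃ j, (B j).1 := by
  have hF := hχ.isFilterOn
  constructor
  · rintro ⟨hA, hB⟩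
    choose W hW hWB using fun j => hχ.exists_disjoint_of_eq_false (hB j)
    obtain ⟨Z, hZ, hZsub⟩ := hF.exists_mem_subset_of_finite (fun o : Option ι => o.elim A W)
      (Option.rec hA hW)
    refine ⟨Z, hZ, fun x hx => ⟨hZsub none hx, ?_⟩⟩
    simp only [Set.mem_iUnion, not_exists]
    exact fun j hxB => (hWB j).notMem_of_mem_left (hZsub (some j) hx) hxB
  · rintro ⟨Z, hZ, hZsub⟩
    refine ⟨hF.2.2.2 Z hZ A (hZsub.trans Set.sdiff_subset), fun j => ?_⟩
    by_contra hBj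
    obtain ⟨x, hxZ, hxB⟩ := hχ.nonempty (hF.inter_mem hZ (Bool.not_eq_false _ ▸ hBj))
    exact (hZsub hxZ).2 (Set.mem_iUnion.mpr ⟨j, hxB⟩)

lemma exists_disjoint_diff_of_not_eval (hχ : IsMaximalChar χ) {A : CIdeal M} {ι : Type*}
    {B : ι → CIdeal M} (h : ¬ (χ A = true ∧ ∀ j, χ (B j) = false)) :
    ∃ Z, χ Z = true ∧ Disjoint Z.1 (A.1 \ ⋃ j, (B j).1) := by
  by_cases hA : χ A = true
  · obtain ⟨j, hj⟩ : ∃ j, χ (B j) = true := by simpa [hA] using h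
    exact ⟨B j, hj, Set.disjoint_left.mpr fun x hx hxd => hxd.2 (Set.mem_iUnion.mpr ⟨j, hx⟩)⟩
  · obtain ⟨Z, hZ, hZA⟩ := hχ.exists_disjoint_of_eq_false (Bool.eq_false_iff.mpr hA)
    exact ⟨Z, hZ, hZA.mono_right Set.sdiff_subset⟩

lemma exists_princhar_eq (hχ : IsMaximalChar χ) (I : Finset (CIdeal M)) :
    ∃ s, ∀ X ∈ I, princhar s X = χ X := by
  have hlocal (X : CIdeal M) : ∃ Z, χ Z = true ∧ ∀ s ∈ Z.1, princhar s X = χ X := by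
    cases hX : χ X
    · obtain ⟨Z, hZ, hZX⟩ := hχ.exists_disjoint_of_eq_false hX
      exact ⟨Z, hZ, fun s hs => decide_eq_false (hZX.notMem_of_mem_left hs)⟩
    · exact ⟨X, hX, fun s hs => decide_eq_true hs⟩
  choose Z hZ hZX using hlocal
  obtain ⟨Z', hZ', hZ'sub⟩ :=
    hχ.isFilterOn.exists_mem_subset_of_finite (fun X : I => Z X) fun X => hZ X
  obtain ⟨s, hs⟩ := hχ.nonempty hZ'
  exact ⟨s, fun X hX => hZX X s (hZ'sub ⟨X, hX⟩ hs)⟩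

end IsMaximalChar

lemma omegaMax_subset_omega [Mul M] [IsLeftCancelMul M] : OmegaMax M ⊆ Omega M := by
  intro χ hχ
  refine mem_closure_iff.mpr fun O hO hχO => ?_
  obtain ⟨I, u, hIu, hIO⟩ := isOpen_pi_iff.mp hO χ hχO
  obtain ⟨s, hs⟩ := IsMaximalChar.exists_princhar_eq hχ I
  exact ⟨princhar s, hIO fun X hX => (hs X hX).symm ▸ (hIu X hX).2, Set.mem_range_self s⟩

theorem cstar_stmt2_general {M : Type*} [Monoid M] [IsLeftCancelMul M]
    (m : ℕ)
    (m₀ : ℕ) (X₀ : CIdeal M) (Xj : Fin m₀ → CIdeal M)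
    (mi : Fin m → ℕ) (Xi0 : Fin m → CIdeal M)
    (Xij : (i : Fin m) → Fin (mi i) → CIdeal M)
    (X : Set M) (hXdef : X = X₀.1 \ ⋃ j, (Xj j).1)
    (XI : Fin m → Set M) (hXIdef : ∀ i, XI i = (Xi0 i).1 \ ⋃ j, (Xij i j).1)
    (hsub : ∀ i, XI i ⊆ X) :
    Disjoint
      {η | η ∈ Omega M ∧
        (η X₀ = true ∧ ∀ j, η (Xj j) = false) ∧
        ∀ i, ¬ (η (Xi0 i) = true ∧ ∀ j, η (Xij i j) = false)}
      (BoundaryOmega M)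
    ↔ IsFoundation X XI := by
  subst hXdef
  constructor
  · refine fun hdisj => ⟨hsub, fun Y hYc hYne hYX => ?_⟩
    by_contra! hmiss
    obtain ⟨χ, hχ, hχY⟩ := exists_isMaximalChar_eq_true (Y := ⟨Y, hYc⟩) hYne
    refine Set.disjoint_left.mp hdisj ⟨omegaMax_subset_omega hχ,
      (hχ.eval_diff_iff _ _).mpr ⟨_, hχY, hYX⟩, fun i hi => ?_⟩ (subset_closure hχ)
    obtain ⟨Z, hZ, hZXI⟩ := (hχ.eval_diff_iff _ _).mp hi
    obtain ⟨x, hxY, hxZ⟩ := hχ.nonempty (hχ.isFilterOn.inter_mem hχY hZ)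
    exact (hmiss i).subset ⟨hxY, hXIdef i ▸ hZXI hxZ⟩
  · rintro ⟨-, hfound⟩
    refine Set.disjoint_left.mpr fun η ⟨_, hηU⟩ hη => ?_
    obtain ⟨χ, ⟨hχX, hχXI⟩, hχ⟩ := mem_closure_iff.mp hη _
      (isOpen_setOf_eval_diff_and_forall_not_eval_diff X₀ Xj Xi0 Xij) hηU
    obtain ⟨Z₀, hZ₀, hZ₀X⟩ := (hχ.eval_diff_iff _ _).mp hχX
    choose W hW hWXI using fun i => hχ.exists_disjoint_diff_of_not_eval (hχXI i)
    obtain ⟨Z, hZ, hZsub⟩ := hχ.isFilterOn.exists_mem_subset_of_finite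
      (fun o : Option (Fin m) => o.elim Z₀ W) (Option.rec hZ₀ hW)
    obtain ⟨i, x, hxZ, hxXI⟩ := hfound Z.1 Z.2 (hχ.nonempty hZ) ((hZsub none).trans hZ₀X)
    exact (hWXI i).notMem_of_mem_left (hZsub (some i) hxZ) (hXIdef i ▸ hxXI)

/-- Let `X = X₀ ∖ ⋃ⱼ Xj j` and `Xi i = Xi0 i ∖ ⋃ⱼ Xij i j` be sets in
`J̄(S)` (all ingredients constructible right ideals) with `Xi i ⊆ X` for all `i`
(`m ≥ 1`).  With `η(X) = 1` interpreted through the given representations, the set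
`U = {η ∈ Ω(S) : η(X) = 1, η(Xᵢ) = 0 for all i}` is disjoint from `∂Ω(S)` if and only
if `{X₁, …, Xₘ}` is a foundation set for `X`. -/
theorem cstar_stmt2 {M : Type*} [Monoid M] [IsLeftCancelMul M]
    (m : ℕ) (hm : 1 ≤ m)
    (m₀ : ℕ) (X₀ : CIdeal M) (Xj : Fin m₀ → CIdeal M)
    (mi : Fin m → ℕ) (Xi0 : Fin m → CIdeal M)
    (Xij : (i : Fin m) → Fin (mi i) → CIdeal M)
    (X : Set M) (hXdef : X = X₀.1 \ ⋃ j, (Xj j).1)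
    (XI : Fin m → Set M) (hXIdef : ∀ i, XI i = (Xi0 i).1 \ ⋃ j, (Xij i j).1)
    (hsub : ∀ i, XI i ⊆ X) :
    Disjoint
      {η | η ∈ Omega M ∧
        (η X₀ = true ∧ ∀ j, η (Xj j) = false) ∧
        ∀ i, ¬ (η (Xi0 i) = true ∧ ∀ j, η (Xij i j) = false)}
      (BoundaryOmega M)
    ↔ IsFoundation X XI :=
  cstar_stmt2_general m m₀ X₀ Xj mi Xi0 Xij X hXdef XI hXIdef hsub

end SgC
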